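/- arXiv:2312.06610 — 9 statements merged into one kernel-verified Lean document; each statement's English description precedes it below -/
import Mathlib

section
/- For any permutation φ of [n] and any r-uniform hypergraphs G and H on [n], we have φ(G \ H) = H \ G (where φ acts on edges elementwise) if and only if: (i) for every choosable pair (e,f) for (G,φ), H contains exactly one of e and f; and (ii) for every r-set e not contained in any choosable pair for (G,φ), G and H agree on e (i.e., e ∈ G ↔ e ∈ H). -/
/-- characterization of φ(G \ H) = H \ G via choosable pairs. -/
theorem stmt_0 (n r : ℕ) (φ : Equiv.Perm (Fin n)) (G H : Finset (Finset (Fin n)))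
    (hG : ∀ e ∈ G, e.card = r) (hH : ∀ e ∈ H, e.card = r) :
    (G \ H).image (Finset.image φ) = H \ G ↔
      ((∀ e f : Finset (Fin n), e.image φ = f → e ∈ G → f ∉ G → (e ∈ H ↔ f ∉ H)) ∧
       (∀ e : Finset (Fin n), e.card = r →
          (¬ ∃ f : Finset (Fin n),
            (e.image φ = f ∧ e ∈ G ∧ f ∉ G) ∨ (f.image φ = e ∧ f ∈ G ∧ e ∉ G)) →
          (e ∈ G ↔ e ∈ H))) := by
  have hinj : Function.Injective (Finset.image (φ : Fin n → Fin n)) :=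
    Finset.image_injective φ.injective
  have hsymm : ∀ e : Finset (Fin n), (e.image φ.symm).image φ = e := by
    intro e
    rw [Finset.image_image]
    simp
  constructor
  · intro h
    have key : ∀ e : Finset (Fin n),
        (e ∈ G ∧ e ∉ H) ↔ (e.image φ ∈ H ∧ e.image φ ∉ G) := by
      intro e
      have h1 : e.image φ ∈ (G \ H).image (Finset.image φ) ↔ e ∈ G \ H := by
        constructor
        · intro he
          obtain ⟨a, ha, hae⟩ := Finset.mem_image.mp he
          rwa [← hinj hae]
        · intro he; exact Finset.mem_image_of_mem _ he
      rw [h] at h1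
      simp only [Finset.mem_sdiff] at h1
      exact h1.symm
    constructor
    · intro e f hef heG hfG
      subst hef
      have := key e
      tauto
    · intro e _ hno
      have h1 := key e
      have h2 := key (e.image φ.symm)
      rw [hsymm e] at h2
      have hA : ¬(e ∈ G ∧ e.image φ ∉ G) := fun ⟨x1, x2⟩ =>
        hno ⟨e.image φ, Or.inl ⟨rfl, x1, x2⟩⟩
      have hB : ¬(e.image φ.symm ∈ G ∧ e ∉ G) := fun ⟨x1, x2⟩ =>
        hno ⟨e.image φ.symm, Or.inr ⟨hsymm e, x1, x2⟩⟩
      tauto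
  · rintro ⟨h1, h2⟩
    ext g
    simp only [Finset.mem_image, Finset.mem_sdiff]
    constructor
    · rintro ⟨a, ⟨haG, haH⟩, rfl⟩
      by_cases hg : a.image φ ∈ G
      · exfalso
        have hno : ¬ ∃ f : Finset (Fin n),
            (a.image φ = f ∧ a ∈ G ∧ f ∉ G) ∨ (f.image φ = a ∧ f ∈ G ∧ a ∉ G) := by
          rintro ⟨f, hf | hf⟩
          · exact hf.2.2 (hf.1 ▸ hg)
          · exact hf.2.2 haG
        exact haH ((h2 a (hG a haG) hno).mp haG)
      · have := h1 a (a.image φ) rfl haG hg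
        exact ⟨by tauto, hg⟩
    · rintro ⟨hgH, hgG⟩
      by_cases haG : g.image φ.symm ∈ G
      · refine ⟨g.image φ.symm, ⟨haG, ?_⟩, hsymm g⟩
        have := h1 (g.image φ.symm) g (hsymm g) haG hgG
        tauto
      · exfalso
        have hno : ¬ ∃ f : Finset (Fin n),
            (g.image φ = f ∧ g ∈ G ∧ f ∉ G) ∨ (f.image φ = g ∧ f ∈ G ∧ g ∉ G) := by
          rintro ⟨f, hf | hf⟩
          · exact hgG hf.2.1
          · exact haG (hinj (hf.1.trans (hsymm g).symm) ▸ hf.2.1)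
        exact hgG ((h2 g (hH g hgH) hno).mpr hgH)
end

section
/- If G is an r-uniform hypergraph on [n], φ is a permutation of [n], and m is the number of choosable pairs for (G,φ), then the number of r-uniform hypergraphs H on [n] satisfying φ(G \ H) = H \ G is at most 2^m. -/
/-!
A solution `H` is recovered from `G \ H`: it keeps `G ∩ H = G \ (G \ H)` and gains exactly
`H \ G = φ(G \ H)`. Moreover every `e ∈ G \ H` is choosable, since `φ e ∈ H \ G` lies outside `G`.
So `H ↦ G \ H` embeds the solutions into the subsets of the `m` choosable edges.
-/

open Finset

variable {α : Type*} [DecidableEq α]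

/-- The first components of the choosable pairs of `(G, f)`. -/
def choosableEdges (f : α → α) (G : Finset α) : Finset α :=
  G.filter fun e => f e ∉ G

theorem card_choosablePairs [Fintype α] (f : α → α) (G : Finset α) :
    #((univ ×ˢ univ).filter fun p : α × α => f p.1 = p.2 ∧ p.1 ∈ G ∧ p.2 ∉ G) =
      #(choosableEdges f G) := by
  have hpairs : ((univ ×ˢ univ).filter fun p : α × α => f p.1 = p.2 ∧ p.1 ∈ G ∧ p.2 ∉ G) =
      (choosableEdges f G).map ⟨fun e => (e, f e), fun _ _ h => (Prod.mk.inj h).1⟩ := by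
    ext ⟨e, e'⟩
    simp only [choosableEdges, mem_filter, mem_product, mem_univ, true_and, mem_map]
    constructor
    · rintro ⟨rfl, he, he'⟩
      exact ⟨e, ⟨he, he'⟩, rfl⟩
    · rintro ⟨e, ⟨he, he'⟩, h⟩
      obtain ⟨rfl, rfl⟩ := Prod.mk.inj h
      exact ⟨rfl, he, he'⟩
  rw [hpairs, card_map]

section Solutions

variable {f : α → α} {G H : Finset α}

theorem sdiff_subset_choosableEdges (hH : (G \ H).image f = H \ G) :
    G \ H ⊆ choosableEdges f G := by
  intro e he
  have hfe : f e ∈ H \ G := hH ▸ mem_image_of_mem f he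
  exact mem_filter.mpr ⟨(mem_sdiff.mp he).1, (mem_sdiff.mp hfe).2⟩

theorem eq_sdiff_union_image_of_image_sdiff_eq (hH : (G \ H).image f = H \ G) :
    H = (G \ (G \ H)) ∪ (G \ H).image f := by
  rw [hH, sdiff_sdiff_right_self, inf_eq_inter, inter_comm, union_comm, sdiff_union_inter]

end Solutions

theorem card_filter_image_sdiff_eq_le_two_pow [Fintype α] (f : α → α) (G : Finset α) :
    #(univ.filter fun H : Finset α => (G \ H).image f = H \ G) ≤ 2 ^ #(choosableEdges f G) := by
  rw [← card_powerset]
  refine card_le_card_of_injOn (G \ ·) (fun H hH => ?_) (fun H₁ hH₁ H₂ hH₂ hsdiff => ?_)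
  · exact mem_powerset.mpr (sdiff_subset_choosableEdges (mem_filter.mp hH).2)
  · rw [eq_sdiff_union_image_of_image_sdiff_eq (mem_filter.mp hH₁).2,
      eq_sdiff_union_image_of_image_sdiff_eq (mem_filter.mp hH₂).2, show G \ H₁ = G \ H₂ from hsdiff]

theorem stmt_1_general (n r m : ℕ) (φ : Equiv.Perm (Fin n)) (G : Finset (Finset (Fin n)))
    (hm : m = (Finset.filter
      (fun p : Finset (Fin n) × Finset (Fin n) => p.1.image φ = p.2 ∧ p.1 ∈ G ∧ p.2 ∉ G)
      (Finset.univ ×ˢ Finset.univ)).card) :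
    ((Finset.univ : Finset (Finset (Finset (Fin n)))).filter
      (fun H => (∀ e ∈ H, e.card = r) ∧ (G \ H).image (Finset.image φ) = H \ G)).card
      ≤ 2 ^ m := by
  rw [hm, card_choosablePairs]
  refine le_trans (card_le_card fun H hH => ?_) (card_filter_image_sdiff_eq_le_two_pow _ G)
  exact mem_filter.mpr ⟨mem_univ H, (mem_filter.mp hH).2.2⟩

/-- the number of H with φ(G \ H) = H \ G is at most 2^m, where m is
the number of choosable pairs for (G, φ). -/
theorem stmt_1 (n r m : ℕ) (φ : Equiv.Perm (Fin n)) (G : Finset (Finset (Fin n)))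
    (hG : ∀ e ∈ G, e.card = r)
    (hm : m = (Finset.filter
      (fun p : Finset (Fin n) × Finset (Fin n) => p.1.image φ = p.2 ∧ p.1 ∈ G ∧ p.2 ∉ G)
      (Finset.univ ×ˢ Finset.univ)).card) :
    ((Finset.univ : Finset (Finset (Finset (Fin n)))).filter
      (fun H => (∀ e ∈ H, e.card = r) ∧ (G \ H).image (Finset.image φ) = H \ G)).card
      ≤ 2 ^ m :=
  stmt_1_general n r m φ G hm
end

section
/- Define f_r(n) = (1/2)·C(n,r) if r is odd and n is even, and f_r(n) = (1/2)·(C(n,r) − C(⌊n/2⌋, ⌊r/2⌋)) otherwise. For all 2 ≤ r ≤ n, the maximum over all involutions ψ ∈ S_n of the number of 2-cycles of the induced permutation ψ̃ on r-subsets of [n] equals f_r(n), and the maximum is attained by any involution with at most one fixed point. -/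
/-- f_r(n) from the paper. -/
def fr (n r : ℕ) : ℕ :=
  if r % 2 = 1 ∧ n % 2 = 0 then n.choose r / 2
  else (n.choose r - (n / 2).choose (r / 2)) / 2

/-- The number of 2-cycles of the permutation induced by ψ on r-subsets of [n]
(half the number of ordered pairs (e,f) of distinct r-sets with ψ(e)=f and ψ(f)=e). -/
def edgeTwoCycles (n r : ℕ) (ψ : Equiv.Perm (Fin n)) : ℕ :=
  (Finset.filter
    (fun p : Finset (Fin n) × Finset (Fin n) =>
      p.1.card = r ∧ p.1 ≠ p.2 ∧ p.1.image ψ = p.2 ∧ p.2.image ψ = p.1)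
    (Finset.univ ×ˢ Finset.univ)).card / 2

/-!
For an involution `ψ` the `r`-sets that are not `ψ`-invariant fall into 2-cycles `{e, ψ e}`, so
the number of 2-cycles is `(C(n, r) - I(ψ)) / 2`, where `I(ψ)` counts the invariant `r`-sets.
`I` is a conjugation invariant and involutions with equally many fixed points are conjugate, so
`ψ` may be taken to swap `2i ↔ 2i+1` for `i < t`. For every `t`, a union of `⌊r/2⌋` blocks
`{2i, 2i+1}` with `i < ⌊n/2⌋`, plus the point `n - 1` when `r` is odd, is invariant (a block
beyond `2t` consists of two fixed points), so `I(ψ) ≥ C(⌊n/2⌋, ⌊r/2⌋)` unless `r` is odd and `n`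
even. When `ψ` has at most one fixed point (`t = ⌊n/2⌋`) these are all the invariant `r`-sets,
and there are none at all if `r` is odd and `n` even.
-/

open Finset Function Equiv

section InvariantSubsets

variable {α β : Type*} [DecidableEq α] [DecidableEq β]

lemma Function.Involutive.finsetImage_image {φ : α → α} (hφ : Involutive φ) (s : Finset α) :
    (s.image φ).image φ = s := by
  rw [image_image, hφ.comp_self, image_id]

lemma Function.Involutive.finsetImage_eq_self_iff {φ : α → α} (hφ : Involutive φ)
    {s : Finset α} : s.image φ = s ↔ ∀ x ∈ s, φ x ∈ s := by
  refine ⟨fun h x hx => h ▸ mem_image_of_mem φ hx, fun h => ?_⟩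
  have hsub : s.image φ ⊆ s := image_subset_iff.2 h
  exact hsub.antisymm (by simpa only [hφ.finsetImage_image] using image_subset_image (f := φ) hsub)

def invariantSubsets (s : Finset α) (r : ℕ) (ψ : α → α) : Finset (Finset α) :=
  {e ∈ powersetCard r s | e.image ψ = e}

lemma card_invariantSubsets_map (f : α ↪ β) {ψ : α → α} {φ : β → β}
    (hf : ∀ x, φ (f x) = f (ψ x)) (s : Finset α) (r : ℕ) :
    #(invariantSubsets (s.map f) r φ) = #(invariantSubsets s r ψ) := by
  have himage : ∀ e : Finset α, (e.map f).image φ = (e.image ψ).map f := by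
    intro e
    simp only [map_eq_image, image_image]
    exact image_congr fun x _ => hf x
  rw [invariantSubsets, powersetCard_map, filter_map, card_map]
  congr 1
  refine filter_congr fun e _ => ?_
  simp only [comp_apply, RelEmbedding.coe_toEmbedding, Finset.mapEmbedding_apply, himage, map_inj]

lemma IsConj.card_invariantSubsets_univ [Fintype α] {ψ ψ' : Perm α} (h : IsConj ψ ψ') (r : ℕ) :
    #(invariantSubsets univ r ψ) = #(invariantSubsets univ r ψ') := by
  obtain ⟨σ, rfl⟩ := isConj_iff.1 h
  simpa [map_univ_equiv] using
    (card_invariantSubsets_map σ.toEmbedding (φ := ⇑(σ * ψ * σ⁻¹)) (by simp) univ r).symm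

lemma card_twoCycles_add_card_invariantSubsets [Fintype α] {ψ : α → α} (hψ : Involutive ψ) (r : ℕ) :
    #{p ∈ (univ : Finset (Finset α)) ×ˢ univ |
        p.1.card = r ∧ p.1 ≠ p.2 ∧ p.1.image ψ = p.2 ∧ p.2.image ψ = p.1} +
      #(invariantSubsets univ r ψ) = (Fintype.card α).choose r := by
  have hpairs : #{p ∈ (univ : Finset (Finset α)) ×ˢ univ |
        p.1.card = r ∧ p.1 ≠ p.2 ∧ p.1.image ψ = p.2 ∧ p.2.image ψ = p.1} =
      #{e ∈ powersetCard r univ | ¬ e.image ψ = e} := by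
    refine card_nbij' Prod.fst (fun e => (e, e.image ψ)) ?_ ?_ ?_ ?_
    · rintro ⟨e, f⟩ hp
      simp only [mem_coe, mem_filter, mem_product, mem_univ, true_and] at hp
      obtain ⟨hcard, hne, rfl, -⟩ := hp
      simpa [hcard] using Ne.symm hne
    · intro e he
      simp only [mem_coe, mem_filter, mem_powersetCard_univ] at he
      simpa [he.1, hψ.finsetImage_image] using Ne.symm he.2
    · rintro ⟨e, f⟩ hp
      simp only [mem_coe, mem_filter, mem_product, mem_univ, true_and] at hp
      obtain ⟨-, -, rfl, -⟩ := hp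
      rfl
    · intro e _
      rfl
  rw [hpairs, invariantSubsets, add_comm, card_filter_add_card_filter_not,
    card_powersetCard, card_univ]

end InvariantSubsets

lemma Equiv.Perm.sq_eq_one_of_involutive {α : Type*} {σ : Perm α} (hσ : Involutive σ) :
    σ ^ 2 = 1 :=
  Equiv.ext fun x => by simp [sq, hσ x]

lemma Equiv.Perm.isConj_of_sq_eq_one {α : Type*} [Fintype α] [DecidableEq α] {σ τ : Perm α}
    (hσ : σ ^ 2 = 1) (hτ : τ ^ 2 = 1) (h : #σ.support = #τ.support) : IsConj σ τ := by
  have hcycleType : ∀ ρ : Perm α, ρ ^ 2 = 1 → ρ.cycleType = .replicate (#ρ.support / 2) 2 := by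
    intro ρ hρ
    have hsum := ρ.sum_cycleType
    rw [cycleType_of_pow_prime_eq_one hρ, Multiset.sum_replicate, smul_eq_mul] at hsum
    rw [cycleType_of_pow_prime_eq_one hρ, ← hsum, Nat.mul_div_cancel _ two_pos]
  rw [isConj_iff_cycleType_eq, hcycleType σ hσ, hcycleType τ hτ, h]

def pairSwapNat (t x : ℕ) : ℕ :=
  if x < 2 * t then (if x % 2 = 0 then x + 1 else x - 1) else x

lemma pairSwapNat_involutive (t : ℕ) : Involutive (pairSwapNat t) := by
  intro x; unfold pairSwapNat; split_ifs <;> omega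

lemma pairSwapNat_div_two (t x : ℕ) : pairSwapNat t x / 2 = x / 2 := by
  unfold pairSwapNat; split_ifs <;> omega

lemma pairSwapNat_of_le {t x : ℕ} (h : 2 * t ≤ x) : pairSwapNat t x = x := by
  simp [pairSwapNat, not_lt.2 h]

lemma pairSwapNat_lt {n t x : ℕ} (ht : 2 * t ≤ n) (hx : x < n) : pairSwapNat t x < n := by
  unfold pairSwapNat; split_ifs <;> omega

def pairsOf (A : Finset ℕ) : Finset ℕ := A.biUnion fun i => {2 * i, 2 * i + 1}

lemma mem_pairsOf {A : Finset ℕ} {x : ℕ} : x ∈ pairsOf A ↔ x / 2 ∈ A := by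
  simp only [pairsOf, mem_biUnion, mem_insert, mem_singleton]
  refine ⟨?_, fun h => ⟨x / 2, h, by omega⟩⟩
  rintro ⟨i, hi, rfl | rfl⟩ <;> simpa [Nat.mul_add_div] using hi

lemma card_pairsOf (A : Finset ℕ) : #(pairsOf A) = 2 * #A := by
  rw [pairsOf, card_biUnion, sum_const_nat fun i _ => card_pair (by omega), mul_comm]
  intro i _ j _ hij
  simp only [disjoint_left, mem_insert, mem_singleton]
  omega

def blockSet (n r : ℕ) (A : Finset ℕ) : Finset ℕ :=
  pairsOf A ∪ if r % 2 = 1 then {n - 1} else ∅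

lemma mem_blockSet {n r x : ℕ} {A : Finset ℕ} :
    x ∈ blockSet n r A ↔ x / 2 ∈ A ∨ (r % 2 = 1 ∧ x = n - 1) := by
  by_cases h : r % 2 = 1 <;> simp [blockSet, mem_pairsOf, h, or_comm]

def halves (n : ℕ) (E : Finset ℕ) : Finset ℕ := {k ∈ range (n / 2) | 2 * k ∈ E}

section Blocks

variable {n r : ℕ} {A : Finset ℕ}

lemma card_blockSet (hA : A ⊆ range (n / 2)) (hodd : r % 2 = 1 → n % 2 = 1) :
    #(blockSet n r A) = 2 * #A + r % 2 := by
  by_cases hr : r % 2 = 1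
  · have hlast : n - 1 ∉ pairsOf A := fun h => by
      have := mem_range.1 (hA (mem_pairsOf.1 h)); have := hodd hr; omega
    rw [blockSet, if_pos hr, card_union_of_disjoint (disjoint_singleton_right.2 hlast),
      card_pairsOf, card_singleton, hr]
  · rw [blockSet, if_neg hr, union_empty, card_pairsOf]
    omega

lemma halves_blockSet (hA : A ⊆ range (n / 2)) (hodd : r % 2 = 1 → n % 2 = 1) :
    halves n (blockSet n r A) = A := by
  ext k
  simp only [halves, mem_filter, mem_range, mem_blockSet, Nat.mul_div_cancel_left k two_pos]
  constructor
  · rintro ⟨hk, hkA | ⟨hr, hk'⟩⟩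
    · exact hkA
    · have := hodd hr; omega
  · exact fun hk => ⟨mem_range.1 (hA hk), Or.inl hk⟩

lemma blockSet_mem_invariantSubsets {t : ℕ} (ht : 2 * t ≤ n)
    (hA : A ∈ powersetCard (r / 2) (range (n / 2))) (hodd : r % 2 = 1 → n % 2 = 1) :
    blockSet n r A ∈ invariantSubsets (range n) r (pairSwapNat t) := by
  rw [mem_powersetCard] at hA
  simp only [invariantSubsets, mem_filter, mem_powersetCard,
    (pairSwapNat_involutive t).finsetImage_eq_self_iff, mem_blockSet]
  refine ⟨⟨fun x hx => ?_, ?_⟩, fun x hx => ?_⟩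
  · rw [mem_blockSet] at hx
    rcases hx with hx | ⟨hr, rfl⟩
    · have := mem_range.1 (hA.1 hx); exact mem_range.2 (by omega)
    · have := hodd hr; exact mem_range.2 (by omega)
  · rw [card_blockSet hA.1 hodd, hA.2]; omega
  · rcases hx with hx | ⟨hr, rfl⟩
    · exact Or.inl (by rwa [pairSwapNat_div_two])
    · have := hodd hr
      exact Or.inr ⟨hr, pairSwapNat_of_le (by omega)⟩

lemma blockSet_injOn (hodd : r % 2 = 1 → n % 2 = 1) :
    Set.InjOn (blockSet n r) (powersetCard (r / 2) (range (n / 2)) : Set (Finset ℕ)) := by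
  refine Set.LeftInvOn.injOn (f₁' := halves n) fun A hA => halves_blockSet ?_ hodd
  exact (mem_powersetCard.1 hA).1

end Blocks

lemma two_mul_div_two_mem_iff {t x : ℕ} {E : Finset ℕ}
    (hcl : ∀ y ∈ E, pairSwapNat t y ∈ E) (hx : x < 2 * t) : 2 * (x / 2) ∈ E ↔ x ∈ E := by
  rcases Nat.even_or_odd' x with ⟨k, rfl | rfl⟩
  · rw [Nat.mul_div_cancel_left k two_pos]
  · have hup : pairSwapNat t (2 * k) = 2 * k + 1 := by unfold pairSwapNat; split_ifs <;> omega
    have hdown : pairSwapNat t (2 * k + 1) = 2 * k := by unfold pairSwapNat; split_ifs <;> omega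
    rw [show 2 * ((2 * k + 1) / 2) = 2 * k by omega]
    exact ⟨fun h => hup ▸ hcl _ h, fun h => hdown ▸ hcl _ h⟩

lemma pairsOf_halves_union {n : ℕ} {E : Finset ℕ} (hcl : ∀ x ∈ E, pairSwapNat (n / 2) x ∈ E) :
    pairsOf (halves n E) ∪ {x ∈ E | 2 * (n / 2) ≤ x} = E := by
  ext x
  simp only [mem_union, mem_pairsOf, halves, mem_filter, mem_range]
  by_cases hx : x < 2 * (n / 2)
  · have : x / 2 < n / 2 := by omega
    simp [this, two_mul_div_two_mem_iff hcl hx, not_le.2 hx]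
  · have : ¬ x / 2 < n / 2 := by omega
    simp [this, not_lt.1 hx]

lemma blockSet_halves {n r : ℕ} {E : Finset ℕ}
    (hE : E ∈ invariantSubsets (range n) r (pairSwapNat (n / 2))) :
    (r % 2 = 1 → n % 2 = 1) ∧ halves n E ∈ powersetCard (r / 2) (range (n / 2)) ∧
      blockSet n r (halves n E) = E := by
  simp only [invariantSubsets, mem_filter, mem_powersetCard,
    (pairSwapNat_involutive _).finsetImage_eq_self_iff] at hE
  obtain ⟨⟨hsub, hcard⟩, hcl⟩ := hE
  set T := {x ∈ E | 2 * (n / 2) ≤ x}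
  have hunion := pairsOf_halves_union hcl
  have hdisj : Disjoint (pairsOf (halves n E)) T := by
    refine disjoint_left.2 fun x hx hxT => ?_
    have := mem_range.1 (filter_subset _ _ (mem_pairsOf.1 hx))
    have := (mem_filter.1 hxT).2
    omega
  -- the elements of `E` not covered by the pairs lie in `[2 * (n / 2), n)`, of size `n % 2`
  have hT : T ⊆ Ico (2 * (n / 2)) n := fun x hx =>
    mem_Ico.2 ⟨(mem_filter.1 hx).2, mem_range.1 (hsub (mem_filter.1 hx).1)⟩
  have hTcard : #T ≤ n % 2 := (card_le_card hT).trans (by rw [Nat.card_Ico]; omega)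
  have hsum : 2 * #(halves n E) + #T = r := by
    rw [← card_pairsOf, ← card_union_of_disjoint hdisj, hunion, hcard]
  have hTeq : T = if r % 2 = 1 then {n - 1} else ∅ := by
    split_ifs with hr
    · refine eq_of_subset_of_card_le (fun x hx => ?_) (by rw [card_singleton]; omega)
      have := mem_Ico.1 (hT hx)
      exact mem_singleton.2 (by omega)
    · exact card_eq_zero.1 (by omega)
  refine ⟨by omega, mem_powersetCard.2 ⟨filter_subset _ _, by omega⟩, ?_⟩
  rw [blockSet, ← hTeq, hunion]

def minInvariantCount (n r : ℕ) : ℕ :=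
  if r % 2 = 1 ∧ n % 2 = 0 then 0 else (n / 2).choose (r / 2)

lemma fr_eq (n r : ℕ) : fr n r = (n.choose r - minInvariantCount n r) / 2 := by
  unfold fr minInvariantCount
  split_ifs <;> rfl

lemma minInvariantCount_le_card_invariantSubsets {n r t : ℕ} (ht : 2 * t ≤ n) :
    minInvariantCount n r ≤ #(invariantSubsets (range n) r (pairSwapNat t)) := by
  unfold minInvariantCount
  split_ifs with h
  · exact Nat.zero_le _
  · have hodd : r % 2 = 1 → n % 2 = 1 := by omega
    calc (n / 2).choose (r / 2) = #(powersetCard (r / 2) (range (n / 2))) := by simp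
      _ ≤ _ := card_le_card_of_injOn (blockSet n r)
          (fun _ hA => blockSet_mem_invariantSubsets ht hA hodd) (blockSet_injOn hodd)

lemma card_invariantSubsets_pairSwapNat_half (n r : ℕ) :
    #(invariantSubsets (range n) r (pairSwapNat (n / 2))) = minInvariantCount n r := by
  unfold minInvariantCount
  split_ifs with h
  · refine card_eq_zero.2 (eq_empty_iff_forall_notMem.2 fun E hE => ?_)
    have := (blockSet_halves hE).1
    omega
  · have hodd : r % 2 = 1 → n % 2 = 1 := by omega
    have himage : invariantSubsets (range n) r (pairSwapNat (n / 2)) =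
        (powersetCard (r / 2) (range (n / 2))).image (blockSet n r) := by
      ext E
      refine ⟨fun hE => ?_, fun hE => ?_⟩
      · obtain ⟨-, hH, hEq⟩ := blockSet_halves hE
        exact mem_image.2 ⟨_, hH, hEq⟩
      · obtain ⟨A, hA, rfl⟩ := mem_image.1 hE
        exact blockSet_mem_invariantSubsets (by omega) hA hodd
    rw [himage, card_image_of_injOn (blockSet_injOn hodd), card_powersetCard, card_range]

def pairSwap (n t : ℕ) (ht : 2 * t ≤ n) : Perm (Fin n) :=
  Involutive.toPerm (fun x => ⟨pairSwapNat t x, pairSwapNat_lt ht x.isLt⟩)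
    fun x => Fin.ext (pairSwapNat_involutive t x)

lemma card_support_pairSwap {n t : ℕ} (ht : 2 * t ≤ n) : #(pairSwap n t ht).support = 2 * t := by
  have hsupport : (pairSwap n t ht).support = univ.filter fun x : Fin n => (x : ℕ) < 2 * t := by
    ext x
    simp only [Perm.mem_support, mem_filter, mem_univ, true_and, ne_eq, Fin.ext_iff]
    simp only [pairSwap, Involutive.coe_toPerm, pairSwapNat]
    split_ifs <;> omega
  rw [hsupport, Fin.card_filter_val_lt]
  omega

lemma card_invariantSubsets_pairSwap {n t : ℕ} (ht : 2 * t ≤ n) (r : ℕ) :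
    #(invariantSubsets univ r (pairSwap n t ht)) =
      #(invariantSubsets (range n) r (pairSwapNat t)) := by
  rw [← card_invariantSubsets_map Fin.valEmbedding (ψ := pairSwap n t ht) (φ := pairSwapNat t)
      (fun _ => rfl),
    Fin.map_valEmbedding_univ, Nat.Iio_eq_range]

lemma exists_isConj_pairSwap {n : ℕ} {ψ : Perm (Fin n)} (hψ : ψ ^ 2 = 1) :
    ∃ t, ∃ ht : 2 * t ≤ n, 2 * t + #{x | ψ x = x} = n ∧ IsConj ψ (pairSwap n t ht) := by
  obtain ⟨t, ht⟩ := Perm.two_dvd_card_support hψ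
  have hsplit : #ψ.support + #{x | ψ x = x} = n := by
    rw [add_comm]
    exact (card_filter_add_card_filter_not (s := univ) (fun x => ψ x = x)).trans (by simp)
  refine ⟨t, by omega, by omega, Perm.isConj_of_sq_eq_one hψ ?_ ?_⟩
  · exact Perm.sq_eq_one_of_involutive (Involutive.toPerm_involutive _)
  · rw [card_support_pairSwap, ht]

lemma edgeTwoCycles_eq {n : ℕ} (r : ℕ) {ψ : Perm (Fin n)} (hψ : Involutive ψ) :
    edgeTwoCycles n r ψ = (n.choose r - #(invariantSubsets univ r ψ)) / 2 := by
  have h := card_twoCycles_add_card_invariantSubsets hψ r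
  rw [Fintype.card_fin] at h
  rw [edgeTwoCycles, ← h, Nat.add_sub_cancel]

lemma exists_edgeTwoCycles_eq {n : ℕ} (r : ℕ) {ψ : Perm (Fin n)} (hψ : Involutive ψ) :
    ∃ t, 2 * t + #{x | ψ x = x} = n ∧
      edgeTwoCycles n r ψ = (n.choose r - #(invariantSubsets (range n) r (pairSwapNat t))) / 2 := by
  obtain ⟨t, ht, hfix, hconj⟩ := exists_isConj_pairSwap (Perm.sq_eq_one_of_involutive hψ)
  refine ⟨t, hfix, ?_⟩
  rw [edgeTwoCycles_eq r hψ, hconj.card_invariantSubsets_univ, card_invariantSubsets_pairSwap]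

theorem stmt_5_general (n r : ℕ) :
    (∀ ψ : Equiv.Perm (Fin n), (∀ x, ψ (ψ x) = x) →
      edgeTwoCycles n r ψ ≤ fr n r) ∧
    (∀ ψ : Equiv.Perm (Fin n), (∀ x, ψ (ψ x) = x) →
      ((Finset.univ : Finset (Fin n)).filter (fun x => ψ x = x)).card ≤ 1 →
      edgeTwoCycles n r ψ = fr n r) := by
  refine ⟨fun ψ hψ => ?_, fun ψ hψ hfix => ?_⟩
  · obtain ⟨t, hfix, hedge⟩ := exists_edgeTwoCycles_eq r hψ
    rw [hedge, fr_eq]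
    exact Nat.div_le_div_right
      (Nat.sub_le_sub_left (minInvariantCount_le_card_invariantSubsets (by omega)) _)
  · obtain ⟨t, hfix', hedge⟩ := exists_edgeTwoCycles_eq r hψ
    obtain rfl : t = n / 2 := by omega
    rw [hedge, fr_eq, card_invariantSubsets_pairSwapNat_half]

/-- for 2 ≤ r ≤ n, the maximum number of 2-cycles of the induced action of an
involution on r-subsets equals f_r(n), attained by any involution with at most one fixed
point. -/
theorem stmt_5 (n r : ℕ) (hr : 2 ≤ r) (hrn : r ≤ n) :
    (∀ ψ : Equiv.Perm (Fin n), (∀ x, ψ (ψ x) = x) →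
      edgeTwoCycles n r ψ ≤ fr n r) ∧
    (∀ ψ : Equiv.Perm (Fin n), (∀ x, ψ (ψ x) = x) →
      ((Finset.univ : Finset (Fin n)).filter (fun x => ψ x = x)).card ≤ 1 →
      edgeTwoCycles n r ψ = fr n r) :=
  stmt_5_general n r
end

section
/- For every involution ψ ∈ S_n, the relation on r-uniform hypergraphs on [n] defined by G ~ H iff ψ(G \ H) = H \ G is an equivalence relation. -/
/-- for an involution ψ, the relation G ~ H iff ψ(G \ H) = H \ G is an
equivalence relation on r-uniform hypergraphs on [n]. -/
theorem stmt_7 (n r : ℕ) (ψ : Equiv.Perm (Fin n)) (hψ : ∀ x, ψ (ψ x) = x) :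
    Equivalence (fun G H : {G : Finset (Finset (Fin n)) // ∀ e ∈ G, e.card = r} =>
      (G.1 \ H.1).image (Finset.image ψ) = H.1 \ G.1) := by
  set σ : Finset (Fin n) → Finset (Fin n) := Finset.image ψ with hσ
  have hσσ : ∀ e, σ (σ e) = e := by
    intro e
    rw [hσ, Finset.image_image]
    ext x
    simp [hψ]
  have hmem : ∀ (X : Finset (Finset (Fin n))) (e : Finset (Fin n)),
      e ∈ X.image σ ↔ σ e ∈ X := by
    intro X e
    constructor
    · intro he
      obtain ⟨a, ha, rfl⟩ := Finset.mem_image.1 he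
      rwa [hσσ]
    · intro h
      exact Finset.mem_image.2 ⟨σ e, h, hσσ e⟩
  have key : ∀ (A B : Finset (Finset (Fin n))),
      (A \ B).image σ = B \ A ↔ ∀ e, (σ e ∈ A ∧ σ e ∉ B) ↔ (e ∈ B ∧ e ∉ A) := by
    intro A B
    rw [Finset.ext_iff]
    apply forall_congr'
    intro e
    rw [hmem, Finset.mem_sdiff, Finset.mem_sdiff]
  constructor
  · intro G; simp
  · intro G H h
    rw [key] at h ⊢
    intro e
    have h2 := h (σ e)
    rw [hσσ] at h2
    exact h2.symm
  · intro G H K hGH hHK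
    rw [key] at hGH hHK ⊢
    intro e
    have h1 := hGH e; have h2 := hGH (σ e); rw [hσσ] at h2
    have h3 := hHK e; have h4 := hHK (σ e); rw [hσσ] at h4
    constructor
    · rintro ⟨hG, hK⟩
      by_cases hH : σ e ∈ H.1
      · obtain ⟨heK, heH⟩ := h3.1 ⟨hH, hK⟩
        exact ⟨heK, fun heG => (h2.1 ⟨heG, heH⟩).2 hG⟩
      · obtain ⟨heH, heG⟩ := h1.1 ⟨hG, hH⟩
        refine ⟨?_, heG⟩
        by_contra heK
        exact hK (h4.1 ⟨heH, heK⟩).1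
    · rintro ⟨heK, heG⟩
      by_cases heH : e ∈ H.1
      · obtain ⟨hG, hH⟩ := h1.2 ⟨heH, heG⟩
        refine ⟨hG, fun hK => ?_⟩
        exact (h4.2 ⟨hK, hH⟩).2 heK
      · obtain ⟨hH, hK⟩ := h3.2 ⟨heK, heH⟩
        exact ⟨by_contra fun hG => heG (h2.2 ⟨hH, hG⟩).1, hK⟩
end

section
/- For every involution ψ ∈ S_n and every family 𝒢 of r-uniform hypergraphs on [n] such that ψ(G₁ \ G₂) = G₂ \ G₁ for all G₁, G₂ ∈ 𝒢, we have |𝒢| ≤ 2^{f_r(n)}. -/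
open Finset

variable {α : Type*} [DecidableEq α]

lemma sup_card_of_pd {B : Finset (Finset α)} (h : (B : Set (Finset α)).PairwiseDisjoint id) :
    (B.sup id).card = ∑ p ∈ B, p.card := by
  rw [Finset.sup_eq_biUnion, Finset.card_biUnion]
  · rfl
  · intro x hx y hy hxy; exact h hx hy hxy

lemma sup_inj_of_pd {PP B B' : Finset (Finset α)} (h : (PP : Set (Finset α)).PairwiseDisjoint id)
    (hne : ∀ p ∈ PP, p.Nonempty) (hB : B ⊆ PP) (hB' : B' ⊆ PP)
    (hs : B.sup id = B'.sup id) : B = B' := by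
  have key : ∀ C C' : Finset (Finset α), C ⊆ PP → C' ⊆ PP → C.sup id = C'.sup id →
      ∀ p ∈ C, p ∈ C' := by
    intro C C' hC hC' hCC' p hp
    obtain ⟨a, ha⟩ := hne p (hC hp)
    have hap : a ∈ C.sup id := Finset.mem_sup.2 ⟨p, hp, ha⟩
    rw [hCC'] at hap
    obtain ⟨q, hq, haq⟩ := Finset.mem_sup.1 hap
    rcases eq_or_ne p q with rfl | hpq
    · exact hq
    · exact absurd ha (Finset.disjoint_left.1 (h (hC hp) (hC' hq) hpq) · haq)
  exact Finset.Subset.antisymm (fun p hp => key B B' hB hB' hs p hp)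
    (fun p hp => key B' B hB' hB hs.symm p hp)

lemma exists_pairing (s : Finset α) :
    ∃ PP : Finset (Finset α), (∀ p ∈ PP, p.card = 2) ∧
      (PP : Set (Finset α)).PairwiseDisjoint id ∧
      PP.card = s.card / 2 ∧ PP.sup id ⊆ s := by
  have H : ∀ k (s : Finset α), s.card = k → ∃ PP : Finset (Finset α),
      (∀ p ∈ PP, p.card = 2) ∧ (PP : Set (Finset α)).PairwiseDisjoint id ∧
      PP.card = s.card / 2 ∧ PP.sup id ⊆ s := by
    intro k
    induction k using Nat.strong_induction_on with
    | _ k ih =>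
    intro s hn
    rcases le_or_gt k 1 with hk | hk
    · exact ⟨∅, by simp, by simp, by simp [hn]; omega, by simp⟩
    · have h0 : (0 : ℕ) < s.card := by omega
      obtain ⟨a, ha⟩ := Finset.card_pos.1 h0
      have h1 : (0 : ℕ) < (s.erase a).card := by rw [Finset.card_erase_of_mem ha]; omega
      obtain ⟨b, hb⟩ := Finset.card_pos.1 h1
      have hab : a ≠ b := fun h => (Finset.ne_of_mem_erase hb) h.symm
      have hbs : b ∈ s := Finset.mem_of_mem_erase hb
      set s' := (s.erase a).erase b with hs'
      have hcard' : s'.card = k - 2 := by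
        rw [hs', Finset.card_erase_of_mem hb, Finset.card_erase_of_mem ha, hn]; omega
      obtain ⟨PP', h2', hd', hc', hsub'⟩ := ih (k - 2) (by omega) s' hcard'
      have hs'sub : s' ⊆ s := (Finset.erase_subset _ _).trans (Finset.erase_subset _ _)
      have hanotin : a ∉ s' := fun h => (Finset.notMem_erase a _) (Finset.mem_of_mem_erase h)
      have hbnotin : b ∉ s' := Finset.notMem_erase b _
      have habdisj : ∀ p ∈ PP', Disjoint ({a, b} : Finset α) p := by
        intro p hp
        have hpsub : p ⊆ s' := (Finset.le_sup (f := id) hp).trans hsub'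
        rw [Finset.disjoint_left]
        intro x hx hxp
        rcases Finset.mem_insert.1 hx with rfl | hx
        · exact hanotin (hpsub hxp)
        · rw [Finset.mem_singleton.1 hx] at hxp; exact hbnotin (hpsub hxp)
      have habnotmem : ({a, b} : Finset α) ∉ PP' := by
        intro h
        have := (Finset.le_sup (f := id) h).trans hsub'
        exact hanotin (this (Finset.mem_insert_self a _))
      refine ⟨insert {a, b} PP', ?_, ?_, ?_, ?_⟩
      · intro p hp
        rcases Finset.mem_insert.1 hp with rfl | hp
        · rw [Finset.card_insert_of_notMem (by simpa using hab), Finset.card_singleton]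
        · exact h2' p hp
      · rw [Finset.coe_insert]
        refine Set.PairwiseDisjoint.insert hd' ?_
        intro p hp hne
        exact (habdisj p hp : Disjoint (id ({a,b}:Finset α)) (id p))
      · rw [Finset.card_insert_of_notMem habnotmem, hc', hcard', hn]; omega
      · rw [Finset.sup_insert]
        simp only [id]
        refine Finset.union_subset ?_ (hsub'.trans hs'sub)
        intro x hx
        rcases Finset.mem_insert.1 hx with rfl | hx
        · exact ha
        · rw [Finset.mem_singleton.1 hx]; exact hbs
  exact H s.card s rfl
open Finset

lemma fixed_count {n r : ℕ} (ψ : Equiv.Perm (Fin n)) (hψ : ∀ x, ψ (ψ x) = x)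
    (h : r % 2 = 0 ∨ n % 2 = 1) :
    (n / 2).choose (r / 2) ≤ ((Finset.powersetCard r (Finset.univ : Finset (Fin n))).filter
      (fun e => e.image ψ = e)).card := by
  classical
  set P : Finset (Fin n) := Finset.univ.filter (fun x => x < ψ x) with hPdef
  set P' : Finset (Fin n) := Finset.univ.filter (fun x => ψ x < x) with hP'def
  set Fx : Finset (Fin n) := Finset.univ.filter (fun x => ψ x = x) with hFxdef
  have hP'img : P' = P.image ψ := by
    ext y
    simp only [hPdef, hP'def, Finset.mem_filter, Finset.mem_univ, true_and, Finset.mem_image]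
    constructor
    · intro hy
      exact ⟨ψ y, by rw [hψ]; exact hy, hψ y⟩
    · rintro ⟨x, hx, rfl⟩
      rw [hψ]; exact hx
  have hcardP' : P'.card = P.card := by
    rw [hP'img, Finset.card_image_of_injective _ ψ.injective]
  have hsplit : 2 * P.card + Fx.card = n := by
    have h1 : P ∪ P' ∪ Fx = Finset.univ := by
      ext x
      simp only [Finset.mem_union, hPdef, hP'def, hFxdef, Finset.mem_filter, Finset.mem_univ,
        true_and, iff_true]
      rcases lt_trichotomy x (ψ x) with h | h | h
      · exact Or.inl (Or.inl h)
      · exact Or.inr h.symm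
      · exact Or.inl (Or.inr h)
    have d1 : Disjoint P P' := by
      rw [Finset.disjoint_left]
      intro x hx hx'
      simp only [hPdef, hP'def, Finset.mem_filter] at hx hx'
      exact absurd (hx.2.trans hx'.2) (lt_irrefl x)
    have d2 : Disjoint (P ∪ P') Fx := by
      rw [Finset.disjoint_left]
      intro x hx hx'
      simp only [hPdef, hP'def, hFxdef, Finset.mem_filter, Finset.mem_union, Finset.mem_univ,
        true_and] at hx hx'
      rcases hx with h | h
      · exact h.ne' hx'
      · exact h.ne hx'
    have := Finset.card_union_of_disjoint d2
    rw [h1, Finset.card_union_of_disjoint d1, hcardP'] at this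
    simp only [Finset.card_univ, Fintype.card_fin] at this
    omega
  -- cycle pairs
  set cyc : Finset (Finset (Fin n)) := P.image (fun x => ({x, ψ x} : Finset (Fin n))) with hcycdef
  have hmemP : ∀ x ∈ P, x < ψ x := by
    intro x hx; simpa [hPdef] using hx
  have hinjP : Set.InjOn (fun x => ({x, ψ x} : Finset (Fin n))) P := by
    intro x hx y hy hxy
    simp only at hxy
    have hx' := hmemP x hx
    have hy' := hmemP y hy
    have h1 : x ∈ ({y, ψ y} : Finset (Fin n)) := by rw [← hxy]; simp
    have h2 : ψ x ∈ ({y, ψ y} : Finset (Fin n)) := by rw [← hxy]; simp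
    rcases Finset.mem_insert.1 h1 with rfl | h1
    · rfl
    · rw [Finset.mem_singleton] at h1
      rcases Finset.mem_insert.1 h2 with h2 | h2
      · -- h2 : ψ x = y, h1 : x = ψ y
        exfalso
        rw [h1, hψ] at hx'
        exact absurd (hx'.trans hy') (lt_irrefl _)
      · rw [Finset.mem_singleton] at h2
        exact ψ.injective h2
  have hcyccard : cyc.card = P.card := Finset.card_image_of_injOn hinjP
  have hcycmem : ∀ p ∈ cyc, ∃ x ∈ P, p = {x, ψ x} := by
    intro p hp
    obtain ⟨x, hx, rfl⟩ := Finset.mem_image.1 hp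
    exact ⟨x, hx, rfl⟩
  have hcycmoved : ∀ p ∈ cyc, ∀ y ∈ p, ψ y ≠ y := by
    intro p hp y hy
    obtain ⟨x, hx, rfl⟩ := hcycmem p hp
    have hx' := hmemP x hx
    rcases Finset.mem_insert.1 hy with rfl | hy
    · exact fun hh => absurd hx' (by rw [hh] at hx' ⊢; exact lt_irrefl _)
    · rw [Finset.mem_singleton] at hy; subst hy
      rw [hψ]
      exact fun hh => absurd hx' (by rw [← hh] at hx'; exact absurd hx' (lt_irrefl _))
  -- fixed pairs
  obtain ⟨fp, hfp2, hfpd, hfpc, hfpsub⟩ := exists_pairing Fx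
  have hfxmem : ∀ x ∈ Fx, ψ x = x := by intro x hx; simpa [hFxdef] using hx
  have hfpfixed : ∀ p ∈ fp, ∀ y ∈ p, ψ y = y := by
    intro p hp y hy
    exact hfxmem y (hfpsub (Finset.mem_sup.2 ⟨p, hp, hy⟩))
  set PP : Finset (Finset (Fin n)) := cyc ∪ fp with hPPdef
  have hPP2 : ∀ p ∈ PP, p.card = 2 := by
    intro p hp
    rcases Finset.mem_union.1 hp with hp | hp
    · obtain ⟨x, hx, rfl⟩ := hcycmem p hp
      rw [Finset.card_insert_of_notMem (by simp [(hmemP x hx).ne]), Finset.card_singleton]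
    · exact hfp2 p hp
  have hPPinv : ∀ p ∈ PP, p.image ψ = p := by
    intro p hp
    rcases Finset.mem_union.1 hp with hp | hp
    · obtain ⟨x, hx, rfl⟩ := hcycmem p hp
      rw [Finset.image_insert, Finset.image_singleton, hψ]
      exact Finset.pair_comm _ _
    · calc p.image ψ = p.image id := Finset.image_congr (fun y hy => hfpfixed p hp y hy)
        _ = p := Finset.image_id
  have hPPdisj : (PP : Set (Finset (Fin n))).PairwiseDisjoint id := by
    intro p hp q hq hpq
    simp only [Function.onFun, id]
    simp only [hPPdef, Finset.coe_union, Set.mem_union, Finset.mem_coe] at hp hq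
    have cf : ∀ p' q' : Finset (Fin n), p' ∈ cyc → q' ∈ fp → Disjoint (id p') (id q') := by
      intro p' q' hp' hq'
      rw [Finset.disjoint_left]
      intro z hz hz'
      exact hcycmoved p' hp' z hz (hfpfixed q' hq' z hz')
    rcases hp with hp | hp <;> rcases hq with hq | hq
    · -- cycle cycle
      obtain ⟨x, hx, rfl⟩ := hcycmem p hp
      obtain ⟨y, hy, rfl⟩ := hcycmem q hq
      have hxy : x ≠ y := fun hh => hpq (by rw [hh])
      rw [Finset.disjoint_left]
      intro z hz hz'
      have hx' := hmemP x hx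
      have hy' := hmemP y hy
      rcases Finset.mem_insert.1 hz with rfl | hz <;>
        rcases Finset.mem_insert.1 hz' with h2 | h2
      · exact hxy h2
      · rw [Finset.mem_singleton] at h2
        rw [h2, hψ] at hx'
        exact absurd (hx'.trans hy') (lt_irrefl _)
      · rw [Finset.mem_singleton] at hz
        have h3 : ψ x = y := by rw [← hz, h2]
        rw [← h3, hψ] at hy'
        exact absurd (hx'.trans hy') (lt_irrefl _)
      · rw [Finset.mem_singleton] at hz h2
        exact hxy (ψ.injective (hz.symm.trans h2))
    · exact cf p q hp hq
    · exact (cf q p hq hp).symm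
    · exact hfpd hp hq hpq
  have hcycfpdisj : Disjoint cyc fp := by
    rw [Finset.disjoint_left]
    intro p hp hp'
    obtain ⟨x, hx, rfl⟩ := hcycmem p hp
    exact hcycmoved _ hp x (by simp) (hfpfixed _ hp' x (by simp))
  have hPPcard : PP.card = n / 2 := by
    have h1 : PP.card = cyc.card + fp.card := Finset.card_union_of_disjoint hcycfpdisj
    omega
  -- extra element
  have hextra : ∃ E : Finset (Fin n), E.card = r % 2 ∧ Disjoint E (PP.sup id) ∧
      (∀ y ∈ E, ψ y = y) := by
    rcases Nat.even_or_odd r with hr | hr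
    · exact ⟨∅, by simp [Nat.even_iff.1 hr], by simp, by simp⟩
    · have hr1 : r % 2 = 1 := Nat.odd_iff.mp hr
      have hn : n % 2 = 1 := h.resolve_left (by omega)
      have hFxodd : Fx.card % 2 = 1 := by omega
      have hfscard : (fp.sup id).card = 2 * fp.card := by
        rw [sup_card_of_pd hfpd, Finset.sum_congr rfl (fun p hp => hfp2 p hp),
          Finset.sum_const, smul_eq_mul]
        omega
      have hlt : (fp.sup id).card < Fx.card := by
        rw [hfscard]
        omega
      have : (Fx \ fp.sup id).Nonempty := by
        rw [← Finset.card_pos, Finset.card_sdiff_of_subset hfpsub]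
        omega
      obtain ⟨x0, hx0⟩ := this
      rw [Finset.mem_sdiff] at hx0
      refine ⟨{x0}, by simp [hr1], ?_, ?_⟩
      · rw [Finset.disjoint_left]
        intro z hz hmem
        rw [Finset.mem_singleton] at hz
        subst hz
        obtain ⟨p, hp, hzp⟩ := Finset.mem_sup.1 hmem
        rcases Finset.mem_union.1 hp with hp | hp
        · exact hcycmoved p hp _ hzp (hfxmem _ hx0.1)
        · exact hx0.2 (Finset.mem_sup.2 ⟨p, hp, hzp⟩)
      · intro y hy
        rw [Finset.mem_singleton] at hy
        subst hy
        exact hfxmem _ hx0.1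
  obtain ⟨E, hEcard, hEdisj, hEfix⟩ := hextra
  -- the injection
  set φ : Finset (Finset (Fin n)) → Finset (Fin n) := fun B => E ∪ B.sup id with hφdef
  have hmaps : ∀ B ∈ Finset.powersetCard (r / 2) PP,
      φ B ∈ (Finset.powersetCard r (Finset.univ : Finset (Fin n))).filter
        (fun e => e.image ψ = e) := by
    intro B hB
    rw [Finset.mem_powersetCard] at hB
    obtain ⟨hBsub, hBcard⟩ := hB
    have hsupmono : B.sup id ⊆ PP.sup id := Finset.sup_mono hBsub
    have hdisjE : Disjoint E (B.sup id) := hEdisj.mono_right hsupmono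
    have hBpd : (B : Set (Finset (Fin n))).PairwiseDisjoint id :=
      hPPdisj.subset (Finset.coe_subset.2 hBsub)
    rw [Finset.mem_filter, Finset.mem_powersetCard_univ]
    refine ⟨?_, ?_⟩
    · rw [hφdef]
      simp only
      rw [Finset.card_union_of_disjoint hdisjE, sup_card_of_pd hBpd,
        Finset.sum_congr rfl (fun p hp => hPP2 p (hBsub hp)), Finset.sum_const, smul_eq_mul,
        hBcard, hEcard]
      omega
    · rw [hφdef]
      simp only
      rw [Finset.image_union]
      congr 1
      · calc E.image ψ = E.image id := Finset.image_congr (fun y hy => hEfix y hy)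
          _ = E := Finset.image_id
      · rw [Finset.sup_eq_biUnion, Finset.biUnion_image]
        exact Finset.biUnion_congr rfl (fun p hp => hPPinv p (hBsub hp))
  have hinj : Set.InjOn φ (Finset.powersetCard (r / 2) PP) := by
    intro B hB B' hB' hBB'
    rw [Finset.mem_coe, Finset.mem_powersetCard] at hB hB'
    have hd1 : Disjoint E (B.sup id) := hEdisj.mono_right (Finset.sup_mono hB.1)
    have hd2 : Disjoint E (B'.sup id) := hEdisj.mono_right (Finset.sup_mono hB'.1)
    have : B.sup id = B'.sup id := by
      have e1 := Finset.union_sdiff_cancel_left hd1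
      have e2 := Finset.union_sdiff_cancel_left hd2
      rw [← e1, ← e2]
      rw [hφdef] at hBB'
      simp only at hBB'
      rw [hBB']
    exact sup_inj_of_pd hPPdisj (fun p hp => Finset.card_pos.1 (by rw [hPP2 p hp]; omega))
      hB.1 hB'.1 this
  calc (n / 2).choose (r / 2) = (Finset.powersetCard (r / 2) PP).card := by
        rw [Finset.card_powersetCard, hPPcard]
    _ ≤ _ := Finset.card_le_card_of_injOn φ hmaps hinj

/-- every ψ-clique (ψ an involution) of r-graphs on [n] has size at most
2^{f_r(n)}. -/
theorem stmt_9 (n r : ℕ) (hr : 2 ≤ r) (hrn : r ≤ n)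
    (ψ : Equiv.Perm (Fin n)) (hψ : ∀ x, ψ (ψ x) = x)
    (𝒢 : Finset (Finset (Finset (Fin n))))
    (hunif : ∀ G ∈ 𝒢, ∀ e ∈ G, e.card = r)
    (hclique : ∀ G₁ ∈ 𝒢, ∀ G₂ ∈ 𝒢, (G₁ \ G₂).image (Finset.image ψ) = G₂ \ G₁) :
    𝒢.card ≤ 2 ^ fr n r := by
  classical
  rcases Finset.eq_empty_or_nonempty 𝒢 with hemp | ⟨G₀, hG₀⟩
  · simp [hemp]
  have hΨinv : ∀ e : Finset (Fin n), (e.image ψ).image ψ = e := by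
    intro e
    rw [Finset.image_image]
    calc e.image (⇑ψ ∘ ⇑ψ) = e.image id := Finset.image_congr (fun x _ => hψ x)
      _ = e := Finset.image_id
  set S : Finset (Finset (Fin n)) :=
    Finset.univ.filter (fun e => e ∉ G₀ ∧ e.image ψ ∈ G₀) with hSdef
  have hmemS : ∀ e, e ∈ S ↔ (e ∉ G₀ ∧ e.image ψ ∈ G₀) := by
    intro e; simp [hSdef]
  have h1 : 𝒢.card ≤ 2 ^ S.card := by
    have hmaps : ∀ G ∈ 𝒢, G \ G₀ ∈ S.powerset := by
      intro G hG
      rw [Finset.mem_powerset]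
      intro e he
      rw [hmemS]
      refine ⟨(Finset.mem_sdiff.1 he).2, ?_⟩
      have hmem : e.image ψ ∈ (G \ G₀).image (Finset.image ψ) :=
        Finset.mem_image_of_mem _ he
      rw [hclique G hG G₀ hG₀] at hmem
      exact (Finset.mem_sdiff.1 hmem).1
    have hinj : Set.InjOn (fun G => G \ G₀) 𝒢 := by
      intro G hG G' hG' hGG'
      simp only at hGG'
      have e2 : G₀ \ G = G₀ \ G' := by
        rw [← hclique G hG G₀ hG₀, ← hclique G' hG' G₀ hG₀, hGG']
      ext e
      have t1 := Finset.ext_iff.1 hGG' e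
      have t2 := Finset.ext_iff.1 e2 e
      simp only [Finset.mem_sdiff] at t1 t2
      by_cases h : e ∈ G₀ <;> tauto
    calc 𝒢.card ≤ S.powerset.card := Finset.card_le_card_of_injOn _ hmaps hinj
      _ = 2 ^ S.card := Finset.card_powerset S
  have hSsub : ∀ e ∈ S, e.card = r ∧ e.image ψ ≠ e := by
    intro e he
    rw [hmemS] at he
    have hc : (e.image ψ).card = r := hunif G₀ hG₀ _ he.2
    rw [Finset.card_image_of_injective _ ψ.injective] at hc
    exact ⟨hc, fun hh => he.1 (hh ▸ he.2)⟩
  set T := (Finset.powersetCard r (Finset.univ : Finset (Fin n))).filter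
    (fun e => ¬(e.image ψ = e)) with hTdef
  set Fxd := (Finset.powersetCard r (Finset.univ : Finset (Fin n))).filter
    (fun e => e.image ψ = e) with hFxddef
  have hTF : Fxd.card + T.card = n.choose r := by
    rw [hFxddef, hTdef, Finset.card_filter_add_card_filter_not,
      Finset.card_powersetCard, Finset.card_univ, Fintype.card_fin]
  have hmemT : ∀ e, e ∈ T ↔ (e.card = r ∧ e.image ψ ≠ e) := by
    intro e
    rw [hTdef, Finset.mem_filter, Finset.mem_powersetCard_univ]
  have hST : 2 * S.card ≤ T.card := by
    have hsub1 : S ⊆ T := by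
      intro e he
      rw [hmemT]
      exact hSsub e he
    have hsub2 : S.image (Finset.image ψ) ⊆ T := by
      intro x hx
      obtain ⟨e, he, rfl⟩ := Finset.mem_image.1 hx
      obtain ⟨hc, _⟩ := hSsub e he
      rw [hmemT]
      constructor
      · rw [Finset.card_image_of_injective _ ψ.injective]; exact hc
      · rw [hΨinv]
        intro hh
        rw [hmemS] at he
        exact he.1 (hh ▸ he.2)
    have hdisj : Disjoint S (S.image (Finset.image ψ)) := by
      rw [Finset.disjoint_left]
      intro e he hx
      obtain ⟨s, hs, rfl⟩ := Finset.mem_image.1 hx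
      rw [hmemS] at he hs
      exact he.1 hs.2
    calc 2 * S.card = S.card + (S.image (Finset.image ψ)).card := by
          rw [Finset.card_image_of_injective _ (Finset.image_injective ψ.injective)]
          omega
      _ = (S ∪ S.image (Finset.image ψ)).card :=
          (Finset.card_union_of_disjoint hdisj).symm
      _ ≤ T.card := Finset.card_le_card (Finset.union_subset hsub1 hsub2)
  have key : 2 * S.card + Fxd.card ≤ n.choose r := by omega
  have hfr : S.card ≤ fr n r := by
    unfold fr
    split_ifs with hif
    · omega
    · have hfc := fixed_count (r := r) ψ hψ (by omega)
      rw [← hFxddef] at hfc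
      omega
  calc 𝒢.card ≤ 2 ^ S.card := h1
    _ ≤ 2 ^ fr n r := Nat.pow_le_pow_right (by norm_num) hfr
end

section
/- Every difference-isomorphic family of r-uniform hypergraphs on [n] has size at most 2 · n! · 2^{(1/2)·C(n,r)}. -/
lemma key_count (n : ℕ) (𝒢 : Finset (Finset (Finset (Fin n)))) (G₀ : Finset (Finset (Fin n)))
    (hdi : ∀ G ∈ 𝒢, ∃ φ : Equiv.Perm (Fin n), (G₀ \ G).image (Finset.image φ) = G \ G₀) :
    𝒢.card ≤ n.factorial * 2 ^ G₀.card := by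
  classical
  have hle : 𝒢.card ≤ ((Finset.univ : Finset (Equiv.Perm (Fin n))) ×ˢ G₀.powerset).card := by
    apply Finset.card_le_card_of_injOn
      (fun G => ((if hG : G ∈ 𝒢 then (hdi G hG).choose else 1), G₀ \ G))
    · intro G hG
      simp [Finset.mem_product, Finset.sdiff_subset]
    · intro G₁ h₁ G₂ h₂ heq
      simp only [Finset.mem_coe] at h₁ h₂
      simp only [dif_pos h₁, dif_pos h₂, Prod.mk.injEq] at heq
      obtain ⟨hφ, hS⟩ := heq
      have s₁ := (hdi G₁ h₁).choose_spec
      have s₂ := (hdi G₂ h₂).choose_spec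
      have hdiff : G₁ \ G₀ = G₂ \ G₀ := by
        rw [← s₁, ← s₂, hφ, hS]
      have hint : G₁ ∩ G₀ = G₂ ∩ G₀ := by
        have : G₀ \ (G₀ \ G₁) = G₀ \ (G₀ \ G₂) := by rw [hS]
        rw [sdiff_sdiff_right_self, sdiff_sdiff_right_self] at this
        rw [Finset.inter_comm G₁ G₀, Finset.inter_comm G₂ G₀]
        exact this
      calc G₁ = G₁ ∩ G₀ ∪ G₁ \ G₀ := by
              rw [← Finset.sup_eq_union, ← Finset.inf_eq_inter, sup_inf_sdiff]
        _ = G₂ ∩ G₀ ∪ G₂ \ G₀ := by rw [hdiff, hint]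
        _ = G₂ := by rw [← Finset.sup_eq_union, ← Finset.inf_eq_inter, sup_inf_sdiff]
  simpa [Finset.card_product, Finset.card_powerset, Fintype.card_perm] using hle

lemma final_calc (n N k c : ℕ) (h : c ≤ n.factorial * 2 ^ k) (hk : 2 * k ≤ N) :
    (c : ℝ) ≤ 2 * n.factorial * 2 ^ ((N : ℝ) / 2) := by
  have h1 : (c : ℝ) ≤ (n.factorial : ℝ) * 2 ^ k := by exact_mod_cast h
  have h2 : (2 : ℝ) ^ (k : ℕ) ≤ (2 : ℝ) ^ ((N : ℝ) / 2) := by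
    rw [← Real.rpow_natCast 2 k]
    apply Real.rpow_le_rpow_left_iff (by norm_num : (1:ℝ) < 2) |>.mpr
    have : (2 : ℝ) * k ≤ N := by exact_mod_cast hk
    linarith
  have h3 : (n.factorial : ℝ) * 2 ^ k ≤ (n.factorial : ℝ) * 2 ^ ((N : ℝ) / 2) := by
    apply mul_le_mul_of_nonneg_left h2 (by positivity)
  have hf : (1 : ℝ) ≤ n.factorial := by exact_mod_cast n.factorial_pos
  nlinarith [Real.rpow_pos_of_pos (by norm_num : (0:ℝ) < 2) ((N : ℝ)/2)]

/-- every difference-isomorphic family of r-graphs on [n] has size at most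
2·n!·2^{(1/2)C(n,r)}. -/
theorem stmt_13 (n r : ℕ) (𝒢 : Finset (Finset (Finset (Fin n))))
    (hunif : ∀ G ∈ 𝒢, ∀ e ∈ G, e.card = r)
    (hdi : ∀ G₁ ∈ 𝒢, ∀ G₂ ∈ 𝒢, ∃ φ : Equiv.Perm (Fin n),
      (G₁ \ G₂).image (Finset.image φ) = G₂ \ G₁) :
    (𝒢.card : ℝ) ≤ 2 * n.factorial * 2 ^ ((n.choose r : ℝ) / 2) := by
  classical
  rcases 𝒢.eq_empty_or_nonempty with h | ⟨G₀, hG₀⟩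
  · rw [h]
    simp only [Finset.card_empty, Nat.cast_zero]
    positivity
  set A := (Finset.univ : Finset (Fin n)).powersetCard r with hA
  have hsub : ∀ G ∈ 𝒢, G ⊆ A := by
    intro G hG e he
    rw [hA, Finset.mem_powersetCard]
    exact ⟨Finset.subset_univ _, hunif G hG e he⟩
  have hN : A.card = n.choose r := by
    rw [hA, Finset.card_powersetCard, Finset.card_univ, Fintype.card_fin]
  set N := n.choose r with hNdef
  have hm : G₀.card ≤ N := hN ▸ Finset.card_le_card (hsub G₀ hG₀)
  by_cases hcase : 2 * G₀.card ≤ N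
  · exact final_calc n N G₀.card 𝒢.card
      (key_count n 𝒢 G₀ (fun G hG => hdi G₀ hG₀ G hG)) hcase
  · -- complement case
    set 𝒢' := 𝒢.image (fun G => A \ G) with h𝒢'
    have hinj : Set.InjOn (fun G => A \ G) 𝒢 := by
      intro G₁ h₁ G₂ h₂ heq
      have e₁ : A \ (A \ G₁) = G₁ := sdiff_sdiff_eq_self (hsub G₁ h₁)
      have e₂ : A \ (A \ G₂) = G₂ := sdiff_sdiff_eq_self (hsub G₂ h₂)
      simp only at heq
      rw [← e₁, ← e₂, heq]
    have hcard' : 𝒢'.card = 𝒢.card := Finset.card_image_of_injOn hinj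
    have hdi' : ∀ G' ∈ 𝒢', ∃ φ : Equiv.Perm (Fin n),
        ((A \ G₀) \ G').image (Finset.image φ) = G' \ (A \ G₀) := by
      intro G' hG'
      rw [h𝒢', Finset.mem_image] at hG'
      obtain ⟨G, hG, rfl⟩ := hG'
      have e1 : (A \ G₀) \ (A \ G) = G \ G₀ :=
        sdiff_sdiff_sdiff_cancel_left (hsub G hG)
      have e2 : (A \ G) \ (A \ G₀) = G₀ \ G :=
        sdiff_sdiff_sdiff_cancel_left (hsub G₀ hG₀)
      obtain ⟨φ, hφ⟩ := hdi G hG G₀ hG₀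
      exact ⟨φ, by rw [e1, e2]; exact hφ⟩
    have hkey := key_count n 𝒢' (A \ G₀) hdi'
    rw [hcard', Finset.card_sdiff_of_subset (hsub G₀ hG₀), hN] at hkey
    refine final_calc n N (N - G₀.card) 𝒢.card hkey ?_
    omega
end

section
/- Let φ₀ ∈ S_n and 0 ≤ A ≤ n/2. The number of permutations φ ∈ S_n that share at least (n/2 − A) two-cycles with φ₀ is at most n^{2A}. -/
/-!
Each ordered pair `(x, y)` forming a 2-cycle of both `φ₀` and `φ` gives a point `x` where
`φ x = φ₀ x`, distinct pairs giving distinct points. So if `φ` shares at least `n/2 - A`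
2-cycles with `φ₀`, it differs from `φ₀` on at most `2A` points, hence agrees with `φ₀` outside
some set `s` of exactly `2A` points. For fixed `s` these `φ` are `φ₀ * σ` with `σ` a permutation
of `s`, so there are at most `C(n, 2A) · (2A)! = n (n - 1) ⋯ (n - 2A + 1) ≤ n ^ (2A)` of them.
-/

open Finset Equiv

section
variable {α : Type*} [Fintype α] [DecidableEq α]

theorem card_perm_agree_outside_eq_factorial (φ₀ : Perm α) (s : Finset α) :
    #{φ : Perm α | ∀ x ∉ s, φ x = φ₀ x} = (#s).factorial := by
  rw [← Fintype.card_subtype, ← Fintype.card_coe s, ← Fintype.card_perm]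
  refine Fintype.card_congr ((Equiv.subtypeEquiv (Equiv.mulLeft φ₀⁻¹) fun φ => ?_).trans
    (Perm.subtypeEquivSubtypePerm (· ∈ s)).symm)
  simp [Equiv.eq_symm_apply, eq_comm]

theorem card_perm_differ_at_most_le_pow (φ₀ : Perm α) {k : ℕ} (hk : k ≤ Fintype.card α) :
    #{φ : Perm α | #{x | φ x ≠ φ₀ x} ≤ k} ≤ Fintype.card α ^ k := by
  have hcover : ({φ : Perm α | #{x | φ x ≠ φ₀ x} ≤ k} : Finset (Perm α)) ⊆
      (powersetCard k univ).biUnion fun s => {φ : Perm α | ∀ x ∉ s, φ x = φ₀ x} := by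
    intro φ hφ
    obtain ⟨s, hsub, hcard⟩ := exists_superset_card_eq (mem_filter.mp hφ).2 hk
    simp only [mem_biUnion, mem_powersetCard, mem_filter]
    exact ⟨s, ⟨subset_univ s, hcard⟩, mem_univ φ, fun x hx => by
      by_contra hne; exact hx (hsub (by simpa using hne))⟩
  calc _ ≤ ∑ s ∈ powersetCard k univ, #{φ : Perm α | ∀ x ∉ s, φ x = φ₀ x} :=
        (card_le_card hcover).trans card_biUnion_le
    _ = (Fintype.card α).descFactorial k := by
        rw [sum_congr rfl fun s hs => by rw [card_perm_agree_outside_eq_factorial, (mem_powersetCard.mp hs).2],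
          sum_const, card_powersetCard, card_univ, smul_eq_mul,
          Nat.descFactorial_eq_factorial_mul_choose, mul_comm]
    _ ≤ _ := Nat.descFactorial_le_pow _ _

theorem card_shared_twoCycle_pairs_add_card_ne_le (φ₀ φ : Perm α) :
    #{p : α × α | p.1 ≠ p.2 ∧ φ₀ p.1 = p.2 ∧ φ₀ p.2 = p.1 ∧ φ p.1 = p.2 ∧ φ p.2 = p.1}
      + #{x | φ x ≠ φ₀ x} ≤ Fintype.card α := by
  have hfst : #{p : α × α | p.1 ≠ p.2 ∧ φ₀ p.1 = p.2 ∧ φ₀ p.2 = p.1 ∧ φ p.1 = p.2 ∧ φ p.2 = p.1}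
      ≤ #{x | φ x = φ₀ x} := by
    refine card_le_card_of_injOn Prod.fst (fun p hp => ?_) fun p hp q hq hpq => ?_
    · simp only [mem_coe, mem_filter, mem_univ, true_and] at hp ⊢
      rw [hp.2.2.2.1, hp.2.1]
    · simp only [mem_coe, mem_filter, mem_univ, true_and] at hp hq
      exact Prod.ext hpq (by rw [← hp.2.1, ← hq.2.1, hpq])
  have hsplit := card_filter_add_card_filter_not (s := univ) (fun x => φ x = φ₀ x)
  rw [card_univ] at hsplit
  exact hsplit ▸ Nat.add_le_add_right hfst _

end

/-- for 0 ≤ A ≤ n/2, the number of permutations sharing at least n/2 − A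
two-cycles with a fixed permutation φ₀ is at most n^{2A}. (The number of shared 2-cycles
is half the number of ordered pairs (x,y), x ≠ y, forming a 2-cycle of both.) -/
theorem stmt_14 (n A : ℕ) (hA : 2 * A ≤ n) (φ₀ : Equiv.Perm (Fin n)) :
    (((Finset.univ : Finset (Equiv.Perm (Fin n))).filter (fun φ =>
      n - 2 * A ≤ ((Finset.univ ×ˢ Finset.univ : Finset (Fin n × Fin n)).filter
        (fun p => p.1 ≠ p.2 ∧ φ₀ p.1 = p.2 ∧ φ₀ p.2 = p.1 ∧ φ p.1 = p.2 ∧ φ p.2 = p.1)).card)).card)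
      ≤ n ^ (2 * A) := by
  refine le_trans (card_le_card fun φ hφ => ?_)
    (Fintype.card_fin n ▸ card_perm_differ_at_most_le_pow φ₀ (by rwa [Fintype.card_fin]))
  rw [mem_filter, univ_product_univ] at hφ
  have hbound := card_shared_twoCycle_pairs_add_card_ne_le φ₀ φ
  rw [Fintype.card_fin] at hbound
  exact mem_filter.mpr ⟨mem_univ φ, by omega⟩
end

section
/- Let r ≥ 2, n sufficiently large in terms of r, and let δ ≥ 1 with δ = o(n^r). For every permutation ψ ∈ S_n: if the induced permutation ψ̃ on r-subsets of [n] has at least (1/2)·C(n,r) − δ two-cycles, then ψ has at least n/2 − r·δ^{1/r} two-cycles. -/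
/-!
Call an `r`-set bad if it does not lie on a 2-cycle of `ψ̃`, and put `D = δ^{1/r}`; the hypothesis
says that there are at most `2δ = 2Dʳ` bad sets. Every `r`-subset of the fixed points of `ψ` is
bad, so `(f/r)ʳ ≤ C(f, r) ≤ 2Dʳ` bounds the number `f` of fixed points by `(3/2)rD`. If
`ψ (ψ a) ≠ a`, every `r`-set containing `a` but not `ψ (ψ a)` is bad, and double counting gives
`b · C(n-2, r-1) ≤ r · 2Dʳ` for the number `b` of such points; as `D ≤ n/(8r)`, this forces
`b ≤ rD/2`. The remaining `n - f - b ≥ n - 2rD` points lie on 2-cycles of `ψ`.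
-/

open Finset

def OnTwoCycle {β : Type*} (f : β → β) (x : β) : Prop := f x ≠ x ∧ f (f x) = x

instance {β : Type*} [DecidableEq β] (f : β → β) : DecidablePred (OnTwoCycle f) :=
  fun _ => inferInstanceAs (Decidable (_ ∧ _))

theorem card_filter_pairs_swapped {β : Type*} [Fintype β] [DecidableEq β] (f : β → β)
    (p : β → Prop) [DecidablePred p] :
    #((univ ×ˢ univ : Finset (β × β)).filter
        (fun q => p q.1 ∧ q.1 ≠ q.2 ∧ f q.1 = q.2 ∧ f q.2 = q.1)) =
      #(univ.filter (fun x => p x ∧ OnTwoCycle f x)) := by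
  refine card_bij' (fun q _ => q.1) (fun x _ => (x, f x)) ?_ ?_ ?_ ?_
  · rintro ⟨x, y⟩ hq
    obtain ⟨hp, hne, rfl, hy⟩ := by simpa using hq
    exact mem_filter.2 ⟨mem_univ x, hp, Ne.symm hne, hy⟩
  · intro x hx
    obtain ⟨-, hp, hne, hx⟩ := mem_filter.1 hx
    simpa using ⟨hp, Ne.symm hne, hx⟩
  · rintro ⟨x, y⟩ hq
    obtain ⟨-, -, rfl, -⟩ := by simpa using hq
    rfl
  · intro x _
    rfl

section InducedOnSubsets
variable {α : Type*} [Fintype α] [DecidableEq α] (f : α → α)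

theorem card_le_card_onTwoCycle_add_card_fixedPoints_add :
    Fintype.card α ≤ #(univ.filter (OnTwoCycle f)) + #(univ.filter (fun a => f a = a)) +
      #(univ.filter (fun a => f (f a) ≠ a)) := by
  calc Fintype.card α
      ≤ #(univ.filter (OnTwoCycle f) ∪ univ.filter (fun a => f a = a) ∪
          univ.filter (fun a => f (f a) ≠ a)) := by
        rw [← card_univ]
        refine card_le_card fun a _ => ?_
        by_cases h₁ : f a = a <;> by_cases h₂ : f (f a) = a <;> simp [OnTwoCycle, h₁, h₂]
    _ ≤ _ := (card_union_le _ _).trans (by gcongr; exact card_union_le _ _)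

theorem card_filter_onTwoCycle_image_add_card_filter_not (r : ℕ) :
    #(univ.filter (fun A : Finset α => #A = r ∧ OnTwoCycle (image f) A)) +
      #((powersetCard r univ).filter (fun A => ¬ OnTwoCycle (image f) A)) =
      (Fintype.card α).choose r := by
  rw [← card_univ, ← card_powersetCard, ← card_filter_add_card_filter_not
    (s := powersetCard r univ) (p := OnTwoCycle (image f)), powersetCard_eq_filter,
    powerset_univ, filter_filter, filter_filter]

theorem choose_card_fixedPoints_le (r : ℕ) :
    (#(univ.filter (fun a => f a = a))).choose r ≤
      #((powersetCard r univ).filter (fun A => ¬ OnTwoCycle (image f) A)) := by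
  rw [← card_powersetCard]
  refine card_le_card fun A hA => ?_
  obtain ⟨hAfix, hAr⟩ := mem_powersetCard.1 hA
  have himage : A.image f = A := by
    conv_rhs => rw [← image_id (s := A)]
    exact image_congr fun a ha => (mem_filter.1 (hAfix ha)).2
  exact mem_filter.2 ⟨mem_powersetCard_univ.2 hAr, fun h => h.1 himage⟩

theorem choose_card_sub_two_le_card_mem_not_mem {a c : α} (hac : a ≠ c) (k : ℕ) :
    (Fintype.card α - 2).choose k ≤
      #((powersetCard (k + 1) univ).filter (fun A => a ∈ A ∧ c ∉ A)) := by
  have hcard : #(univ \ {a, c}) = Fintype.card α - 2 := by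
    rw [card_sdiff_of_subset (subset_univ _), card_univ, card_pair hac]
  rw [← hcard, ← card_powersetCard]
  refine card_le_card_of_injOn (insert a) (fun S hS => ?_) (fun S hS T hT hST => ?_)
  · obtain ⟨hSsub, hSk⟩ := mem_powersetCard.1 hS
    have haS : a ∉ S := fun h => by simpa using hSsub h
    have hcS : c ∉ S := fun h => by simpa using hSsub h
    simp [card_insert_of_notMem haS, hSk, hac.symm, hcS]
  · have haS : a ∉ S := fun h => by simpa using (mem_powersetCard.1 hS).1 h
    have haT : a ∉ T := fun h => by simpa using (mem_powersetCard.1 hT).1 h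
    rw [← erase_insert haS, ← erase_insert haT]
    exact congrArg (·.erase a) hST

theorem card_not_involutive_mul_choose_le {r : ℕ} (hr : 1 ≤ r) :
    #(univ.filter (fun a => f (f a) ≠ a)) * (Fintype.card α - 2).choose (r - 1) ≤
      #((powersetCard r univ).filter (fun A => ¬ OnTwoCycle (image f) A)) * r := by
  refine card_mul_le_card_mul (fun a A => a ∈ A) (fun a ha => ?_) (fun A hA => ?_)
  · have hfa : f (f a) ≠ a := (mem_filter.1 ha).2
    obtain ⟨k, rfl⟩ : ∃ k, r = k + 1 := ⟨r - 1, by omega⟩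
    refine (choose_card_sub_two_le_card_mem_not_mem hfa.symm k).trans (card_le_card ?_)
    intro A hA
    obtain ⟨hAr, haA, hcA⟩ := by simpa using hA
    have : ¬ OnTwoCycle (image f) A := fun h =>
      hcA (h.2 ▸ mem_image_of_mem f (mem_image_of_mem f haA))
    simp [bipartiteAbove, hAr, haA, this]
  · calc #(bipartiteBelow (fun a A => a ∈ A) _ A) ≤ #A :=
          card_le_card fun a ha => (mem_filter.1 ha).2
      _ = r := (mem_powersetCard_univ.1 (mem_filter.1 hA).1)

end InducedOnSubsets

theorem Nat.pow_le_pow_mul_choose {n k : ℕ} (h : k ≤ n) : n ^ k ≤ k ^ k * n.choose k := by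
  have hprod : n ^ k * k.factorial ≤ k ^ k * n.descFactorial k := by
    rw [← descFactorial_self, descFactorial_eq_prod_range, descFactorial_eq_prod_range,
      ← card_range k, ← prod_const, ← prod_const, card_range, ← prod_mul_distrib,
      ← prod_mul_distrib]
    refine prod_le_prod' fun i hi => ?_
    have hik : i < k := mem_range.1 hi
    zify [hik.le, hik.le.trans h]
    nlinarith
  rw [descFactorial_eq_factorial_mul_choose, mul_left_comm, mul_comm] at hprod
  exact Nat.le_of_mul_le_mul_left hprod k.factorial_pos

theorem div_pow_le_choose (n k : ℕ) (h : k ≤ n) : ((n : ℝ) / k) ^ k ≤ n.choose k := by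
  rcases k.eq_zero_or_pos with rfl | hk
  · simp
  rw [div_pow, div_le_iff₀ (by positivity), mul_comm]
  exact_mod_cast Nat.pow_le_pow_mul_choose h

theorem le_of_choose_le_two_mul_pow {f r : ℕ} (hr : 2 ≤ r) {D : ℝ} (hD : 1 ≤ D)
    (h : (f.choose r : ℝ) ≤ 2 * D ^ r) : (f : ℝ) ≤ 3 / 2 * r * D := by
  have hr0 : (0 : ℝ) < r := by positivity
  rcases lt_or_ge f r with hfr | hfr
  · have : (f : ℝ) ≤ r := by exact_mod_cast hfr.le
    nlinarith
  have htwo : (2 : ℝ) ≤ (3 / 2) ^ r :=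
    calc (2 : ℝ) ≤ (3 / 2) ^ 2 := by norm_num
      _ ≤ (3 / 2) ^ r := pow_le_pow_right₀ (by norm_num) hr
  have hpow : ((f : ℝ) / r) ^ r ≤ (3 / 2 * D) ^ r :=
    calc ((f : ℝ) / r) ^ r ≤ f.choose r := div_pow_le_choose f r hfr
      _ ≤ 2 * D ^ r := h
      _ ≤ (3 / 2) ^ r * D ^ r := by gcongr
      _ = (3 / 2 * D) ^ r := (mul_pow _ _ _).symm
  have := (pow_le_pow_iff_left₀ (by positivity) (by positivity) (by omega)).1 hpow
  rw [div_le_iff₀ hr0] at this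
  linarith

theorem le_of_mul_choose_le_two_mul_pow {b n r : ℕ} (hr : 2 ≤ r) {D : ℝ} (hD : 1 ≤ D)
    (hDn : D ≤ n / (8 * r)) (h : (b : ℝ) * (n - 2).choose (r - 1) ≤ 2 * r * D ^ r) :
    (b : ℝ) ≤ r * D / 2 := by
  obtain ⟨k, rfl⟩ : ∃ k, r = k + 1 := ⟨r - 1, by omega⟩
  rw [Nat.add_sub_cancel] at h
  have hk : (1 : ℝ) ≤ k := by exact_mod_cast (by omega : 1 ≤ k)
  push_cast at hDn h ⊢
  have hn : 8 * ((k : ℝ) + 1) ≤ n := by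
    rw [le_div_iff₀ (by positivity)] at hDn
    nlinarith
  have hn2 : ((n - 2 : ℕ) : ℝ) = n - 2 := by
    rw [Nat.cast_sub (by exact_mod_cast (by linarith : (2 : ℝ) ≤ n))]; norm_num
  set x : ℝ := n / (2 * (k + 1)) with hx
  have hx0 : 0 < x := by rw [hx]; exact div_pos (by linarith) (by positivity)
  have hchoose : x ^ k ≤ (n - 2).choose k :=
    calc x ^ k ≤ (((n - 2 : ℕ) : ℝ) / k) ^ k := by
          gcongr
          rw [hn2, hx, div_le_div_iff₀ (by positivity) (by positivity)]
          nlinarith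
      _ ≤ (n - 2).choose k := div_pow_le_choose _ _ (by
          have : ((k : ℕ) : ℝ) ≤ ((n - 2 : ℕ) : ℝ) := by rw [hn2]; linarith
          exact_mod_cast this)
  have hDx : D ≤ x / 4 := by
    rwa [hx, div_div, show 2 * ((k : ℝ) + 1) * 4 = 8 * (k + 1) by ring]
  have hquarter : (x / 4) ^ k ≤ x ^ k / 4 := by
    rw [div_pow]
    gcongr
    exact le_self_pow₀ (by norm_num) (by omega)
  have key : (b : ℝ) * x ^ k ≤ (k + 1) * D / 2 * x ^ k :=
    calc (b : ℝ) * x ^ k ≤ b * (n - 2).choose k := by gcongr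
      _ ≤ 2 * (k + 1) * D ^ (k + 1) := h
      _ = 2 * (k + 1) * D * D ^ k := by ring
      _ ≤ 2 * (k + 1) * D * (x ^ k / 4) := by
          gcongr
          exact (pow_le_pow_left₀ (by linarith) hDx k).trans hquarter
      _ = (k + 1) * D / 2 * x ^ k := by ring
  exact le_of_mul_le_mul_right key (by positivity)

/-- for r ≥ 2, n sufficiently large and 1 ≤ δ = o(n^r): if the induced
permutation of ψ on r-subsets has at least (1/2)C(n,r) − δ two-cycles, then ψ has at least
n/2 − r·δ^{1/r} two-cycles. (Numbers of 2-cycles are expressed as half the number of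
corresponding ordered pairs.) -/
theorem stmt_15 (r : ℕ) (hr : 2 ≤ r) :
    ∃ ε : ℝ, 0 < ε ∧ ∃ n₀ : ℕ, ∀ n : ℕ, n₀ ≤ n → ∀ δ : ℝ, 1 ≤ δ → δ ≤ ε * (n : ℝ) ^ r →
      ∀ ψ : Equiv.Perm (Fin n),
        ((n.choose r : ℝ) / 2 - δ ≤
          (((Finset.univ ×ˢ Finset.univ : Finset (Finset (Fin n) × Finset (Fin n))).filter
            (fun p => p.1.card = r ∧ p.1 ≠ p.2 ∧ p.1.image ψ = p.2 ∧ p.2.image ψ = p.1)).card : ℝ) / 2) →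
        ((n : ℝ) / 2 - (r : ℝ) * δ ^ ((1 : ℝ) / (r : ℝ)) ≤
          (((Finset.univ ×ˢ Finset.univ : Finset (Fin n × Fin n)).filter
            (fun p => p.1 ≠ p.2 ∧ ψ p.1 = p.2 ∧ ψ p.2 = p.1)).card : ℝ) / 2) := by
  refine ⟨(1 / (8 * r)) ^ r, by positivity, 0, fun n _ δ hδ hδn ψ hyp => ?_⟩
  have hr0 : r ≠ 0 := by omega
  set D := δ ^ ((1 : ℝ) / r) with hD
  have hDr : D ^ r = δ := by rw [hD, one_div, Real.rpow_inv_natCast_pow (by linarith) hr0]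
  have hD1 : 1 ≤ D := Real.one_le_rpow hδ (by positivity)
  have hDn : D ≤ n / (8 * r) := by
    rw [← hDr, ← one_div_mul_eq_div, ← mul_pow] at hδn
    exact (pow_le_pow_iff_left₀ (by linarith) (by positivity) hr0).1 (hδn.trans_eq (by ring))
  rw [card_filter_pairs_swapped (image ψ) (fun A => #A = r)] at hyp
  have hpts := card_filter_pairs_swapped ψ (fun _ => True)
  simp only [true_and] at hpts
  rw [hpts]
  have hsets := card_filter_onTwoCycle_image_add_card_filter_not ψ r
  have hfix := choose_card_fixedPoints_le ψ r
  have hinv := card_not_involutive_mul_choose_le ψ (by omega : 1 ≤ r)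
  have htot := card_le_card_onTwoCycle_add_card_fixedPoints_add ψ
  simp only [Fintype.card_fin] at hsets hinv htot
  set bad := #((powersetCard r univ).filter (fun A => ¬ OnTwoCycle (image ψ) A))
  have hbad : (bad : ℝ) ≤ 2 * D ^ r := by
    rw [hDr]; rw [← hsets] at hyp; push_cast at hyp; linarith
  have hf := le_of_choose_le_two_mul_pow hr hD1 (hbad.trans' (by exact_mod_cast hfix))
  have hb := le_of_mul_choose_le_two_mul_pow (b := #(univ.filter fun a => ψ (ψ a) ≠ a))
    hr hD1 hDn <| calc
      _ ≤ (bad : ℝ) * r := by exact_mod_cast hinv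
      _ ≤ 2 * r * D ^ r := by nlinarith
  have htotR : (n : ℝ) ≤ #(univ.filter (OnTwoCycle ψ)) + #(univ.filter fun a => ψ a = a) +
      #(univ.filter fun a => ψ (ψ a) ≠ a) := by exact_mod_cast htot
  linarith
end

section
/- The family of all r-uniform hypergraphs on [r+1] with exactly ⌊(r+1)/2⌋ edges is difference-isomorphic, and hence the maximum size of a difference-isomorphic family of r-graphs on [r+1] is at least C(r+1, ⌊(r+1)/2⌋). -/
open Finset

/-- `edgeOf i` is the complement of the singleton `{i}`: the unique `r`-set missing `i`. -/
private def edgeOf {n : ℕ} (i : Fin (n + 1)) : Finset (Fin (n + 1)) := {i}ᶜ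

private lemma edgeOf_inj {n : ℕ} : Function.Injective (edgeOf (n := n)) := by
  intro i j h
  have h2 := congrArg compl h
  simp only [edgeOf, compl_compl] at h2
  simpa using h2

private lemma card_eq_iff_edge {n : ℕ} (e : Finset (Fin (n + 1))) :
    e.card = n ↔ ∃ i, e = edgeOf i := by
  constructor
  · intro h
    have hc : eᶜ.card = 1 := by
      rw [Finset.card_compl, h]
      simp
    obtain ⟨i, hi⟩ := Finset.card_eq_one.mp hc
    exact ⟨i, by rw [edgeOf, ← hi, compl_compl]⟩
  · rintro ⟨i, rfl⟩
    rw [edgeOf, Finset.card_compl]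
    simp

/-- The set of missing points of a hypergraph. -/
private def pts {n : ℕ} (G : Finset (Finset (Fin (n + 1)))) : Finset (Fin (n + 1)) :=
  Finset.univ.filter (fun i => edgeOf i ∈ G)

private lemma image_pts {n : ℕ} {G : Finset (Finset (Fin (n + 1)))}
    (hG : ∀ e ∈ G, e.card = n) : (pts G).image edgeOf = G := by
  ext e
  simp only [pts, Finset.mem_image, Finset.mem_filter, Finset.mem_univ, true_and]
  constructor
  · rintro ⟨i, hi, rfl⟩; exact hi
  · intro he
    obtain ⟨i, rfl⟩ := (card_eq_iff_edge e).mp (hG e he)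
    exact ⟨i, he, rfl⟩

/-- The family of all r-uniform hypergraphs on [r+1] with exactly ⌊(r+1)/2⌋ edges. -/
def midFamily (r : ℕ) : Finset (Finset (Finset (Fin (r + 1)))) :=
  (Finset.univ : Finset (Finset (Finset (Fin (r + 1))))).filter
    (fun G => (∀ e ∈ G, e.card = r) ∧ G.card = (r + 1) / 2)

/-- the family of all r-graphs on [r+1] with exactly ⌊(r+1)/2⌋ edges is
difference-isomorphic, and it has size C(r+1, ⌊(r+1)/2⌋); hence the maximum size of a
difference-isomorphic family of r-graphs on [r+1] is at least C(r+1, ⌊(r+1)/2⌋). -/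
theorem stmt_18 (r : ℕ) :
    (∀ G₁ ∈ midFamily r, ∀ G₂ ∈ midFamily r, ∃ φ : Equiv.Perm (Fin (r + 1)),
      (G₁ \ G₂).image (Finset.image φ) = G₂ \ G₁) ∧
    (midFamily r).card = (r + 1).choose ((r + 1) / 2) := by
  constructor
  · intro G₁ hG₁ G₂ hG₂
    simp only [midFamily, Finset.mem_filter, Finset.mem_univ, true_and] at hG₁ hG₂
    obtain ⟨h₁u, h₁c⟩ := hG₁
    obtain ⟨h₂u, h₂c⟩ := hG₂
    -- difference sets as images of point sets
    have hdiff : ∀ (A B : Finset (Finset (Fin (r + 1)))),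
        (∀ e ∈ A, e.card = r) → (∀ e ∈ B, e.card = r) →
        A \ B = (pts A \ pts B).image edgeOf := by
      intro A B hA hB
      ext e
      simp only [Finset.mem_sdiff, Finset.mem_image]
      constructor
      · rintro ⟨heA, heB⟩
        obtain ⟨i, rfl⟩ := (card_eq_iff_edge e).mp (hA e heA)
        refine ⟨i, ⟨?_, ?_⟩, rfl⟩ <;> simp [pts, heA, heB]
      · rintro ⟨i, hi, rfl⟩
        simp only [pts, Finset.mem_sdiff, Finset.mem_filter, Finset.mem_univ, true_and] at hi
        exact hi
    have hc₁ : (pts G₁).card = G₁.card := by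
      rw [← Finset.card_image_of_injective (pts G₁) edgeOf_inj, image_pts h₁u]
    have hc₂ : (pts G₂).card = G₂.card := by
      rw [← Finset.card_image_of_injective (pts G₂) edgeOf_inj, image_pts h₂u]
    have hcard : (pts G₁ \ pts G₂).card = (pts G₂ \ pts G₁).card :=
      Finset.card_sdiff_comm (by rw [hc₁, hc₂, h₁c, h₂c])
    set S₁ := pts G₁ \ pts G₂ with hS₁
    set S₂ := pts G₂ \ pts G₁ with hS₂
    -- permutation mapping S₁ onto S₂
    let e : {x // x ∈ S₁} ≃ {x // x ∈ S₂} := Finset.equivOfCardEq hcard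
    refine ⟨e.extendSubtype, ?_⟩
    set φ := e.extendSubtype with hφ
    have himg : S₁.image φ = S₂ := by
      apply Finset.eq_of_subset_of_card_le
      · intro x hx
        rw [Finset.mem_image] at hx
        obtain ⟨y, hy, rfl⟩ := hx
        exact Equiv.extendSubtype_mem e y hy
      · rw [Finset.card_image_of_injective _ φ.injective, hcard]
    have hedge : ∀ i, Finset.image φ (edgeOf i) = edgeOf (φ i) := by
      intro i
      ext x
      simp only [Finset.mem_image, edgeOf, Finset.mem_compl, Finset.mem_singleton]
      constructor
      · rintro ⟨y, hy, rfl⟩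
        exact fun h => hy (φ.injective h)
      · intro hx
        exact ⟨φ.symm x, fun h => hx (by rw [← h]; simp), by simp⟩
    rw [hdiff G₁ G₂ h₁u h₂u, hdiff G₂ G₁ h₂u h₁u, Finset.image_image]
    calc S₁.image (Finset.image φ ∘ edgeOf)
        = S₁.image (edgeOf ∘ φ) := by
          apply Finset.image_congr; intro i _; exact hedge i
      _ = (S₁.image φ).image edgeOf := by rw [Finset.image_image]
      _ = S₂.image edgeOf := by rw [himg]
  · have : midFamily r =
        Finset.powersetCard ((r + 1) / 2)
          (Finset.powersetCard r (Finset.univ : Finset (Fin (r + 1)))) := by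
      ext G
      simp only [midFamily, Finset.mem_filter, Finset.mem_univ, true_and,
        Finset.mem_powersetCard]
      constructor
      · rintro ⟨hu, hc⟩
        exact ⟨fun e he => by simp [Finset.mem_powersetCard, hu e he], hc⟩
      · rintro ⟨hs, hc⟩
        refine ⟨fun e he => ?_, hc⟩
        have := hs he
        rw [Finset.mem_powersetCard] at this
        exact this.2
    rw [this, Finset.card_powersetCard, Finset.card_powersetCard]
    simp
end
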